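/- Root sampling computes the correct Bayesian posterior (Lemma 1, measure-theoretic version): Let Θ be a measurable space equipped with a prior probability measure b₀, let S and A be countable state and action types, and let (θ, s, a, s') ↦ P_θ(s' | s, a) be a jointly measurable nonnegative likelihood with ∑_{s'} P_θ(s' | s, a) = 1 for every θ, s, a. For a history h = (s₀, [(a₁,s₁),…,(a_n,s_n)]), let L_h(θ) = ∏_{t=1}^{n} P_θ(s_t | s_{t−1}, a_t) and define the true posterior measure b(· | h) as the measure with density L_h / (∫ L_h dθ db₀) with respect to b₀, assuming 0 < ∫ L_h db₀ < ∞. Define the root-sampling measures recursively: b̃(· | (s₀,[])) = b₀, and b̃(· | h·(a,s')) is the measure with density θ ↦ P_θ(s' | s_h, a) / (∫ P_{θ'}(s' | s_h, a) db̃(θ' | h)) with respect to b̃(· | h), where s_h is the last state of h, assuming the normalizer is strictly positive and finite. Then for every history h all of whose normalizers are strictly positive and finite, b̃(· | h) = b(· | h) as measures on Θ. -/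

import Mathlib

/-!
Reweighting a measure by a normalized density and then the result by another normalized density
is the same as reweighting once by the normalized product of the two densities: the intermediate
normalizer cancels as long as it is positive and finite. Root sampling reweights the prior by one
transition likelihood at a time, so by induction along the history it ends at the prior reweighted
by the product of all of them, which is the likelihood `L_h`.
-/

open scoped ENNReal
open MeasureTheory

/-- The last state of a history `(s₀, [(a₁,s₁),…,(aₙ,sₙ)])`. -/
def lastState {S A : Type*} (s₀ : S) (l : List (A × S)) : S :=
  l.getLast?.elim s₀ Prod.snd

/-- Likelihood `L_h(θ) = ∏ₜ P_θ(sₜ | sₜ₋₁, aₜ)` of the transitions of a history under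
parameter `θ`, starting from state `s`. -/
noncomputable def lik {Θ S A : Type*} (P : Θ → S → A → S → ℝ≥0∞) (θ : Θ) :
    S → List (A × S) → ℝ≥0∞
  | _, [] => 1
  | s, (a, s') :: rest => P θ s a s' * lik P θ s' rest

/-- The root-sampling measures: starting from the prior, each observed transition
reweights the current belief measure by the density
`θ ↦ P_θ(s' | s_h, a) / ∫ P_θ'(s' | s_h, a) db̃(θ' | h)`,
processing the transitions of the history in order. -/
noncomputable def rootSamplingMeasure {Θ S A : Type*} [MeasurableSpace Θ]
    (P : Θ → S → A → S → ℝ≥0∞) :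
    Measure Θ → S → List (A × S) → Measure Θ
  | μ, _, [] => μ
  | μ, s, (a, s') :: rest =>
      rootSamplingMeasure P
        (μ.withDensity fun θ => P θ s a s' / ∫⁻ θ', P θ' s a s' ∂μ) s' rest

namespace MeasureTheory.Measure

variable {Θ : Type*} [MeasurableSpace Θ]

noncomputable def normalizedWithDensity (μ : Measure Θ) (f : Θ → ℝ≥0∞) : Measure Θ :=
  μ.withDensity fun θ => f θ / ∫⁻ θ', f θ' ∂μ

theorem normalizedWithDensity_one (μ : Measure Θ) [IsProbabilityMeasure μ] :
    μ.normalizedWithDensity 1 = μ := by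
  simp [normalizedWithDensity]

theorem lintegral_normalizedWithDensity {μ : Measure Θ} {f g : Θ → ℝ≥0∞} (hf : Measurable f)
    (hg : Measurable g) :
    ∫⁻ θ, g θ ∂μ.normalizedWithDensity f = (∫⁻ θ, f θ * g θ ∂μ) / ∫⁻ θ, f θ ∂μ := by
  rw [normalizedWithDensity, lintegral_withDensity_eq_lintegral_mul _ (hf.div_const _) hg,
    div_eq_mul_inv, ← lintegral_mul_const _ (show Measurable fun θ => f θ * g θ from hf.mul hg)]
  congr 1 with θ
  simp only [Pi.mul_apply, div_eq_mul_inv]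
  ring

theorem normalizedWithDensity_normalizedWithDensity {μ : Measure Θ} {f g : Θ → ℝ≥0∞}
    (hf : Measurable f) (hg : Measurable g) (hf₀ : ∫⁻ θ, f θ ∂μ ≠ 0) (hf_top : ∫⁻ θ, f θ ∂μ ≠ ∞) :
    (μ.normalizedWithDensity f).normalizedWithDensity g = μ.normalizedWithDensity (f * g) := by
  set c := ∫⁻ θ, f θ ∂μ
  set d := ∫⁻ θ, f θ * g θ ∂μ
  rw [normalizedWithDensity, lintegral_normalizedWithDensity hf hg, normalizedWithDensity,
    ← withDensity_mul _ (hf.div_const _) (hg.div_const _)]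
  congr 1 with θ
  have hcc : c⁻¹ * c = 1 := ENNReal.inv_mul_cancel hf₀ hf_top
  calc f θ / c * (g θ / (d / c)) = f θ * g θ * d⁻¹ * (c⁻¹ * c) := by
        rw [div_eq_mul_inv _ (d / c), ENNReal.inv_div (.inl hf_top) (.inl hf₀)]
        simp only [div_eq_mul_inv]
        ring
    _ = (f * g) θ / ∫⁻ θ, (f * g) θ ∂μ := by
        rw [hcc, mul_one, ← div_eq_mul_inv]
        rfl

end MeasureTheory.Measure

open Measure

section History

variable {Θ S A : Type*} (P : Θ → S → A → S → ℝ≥0∞)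

theorem lastState_cons (s s' : S) (a : A) (l : List (A × S)) :
    lastState s ((a, s') :: l) = lastState s' l := by
  simp only [lastState, List.getLast?_cons]
  cases l.getLast? <;> rfl

theorem lik_append (θ : Θ) (s : S) (l₁ l₂ : List (A × S)) :
    lik P θ s (l₁ ++ l₂) = lik P θ s l₁ * lik P θ (lastState s l₁) l₂ := by
  induction l₁ generalizing s with
  | nil => simp [lik, lastState]
  | cons x l ih =>
    obtain ⟨a, s'⟩ := x
    simp [lik, ih, lastState_cons, mul_assoc]

theorem rootSamplingMeasure_append [MeasurableSpace Θ] (μ : Measure Θ) (s : S)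
    (l₁ l₂ : List (A × S)) :
    rootSamplingMeasure P μ s (l₁ ++ l₂) =
      rootSamplingMeasure P (rootSamplingMeasure P μ s l₁) (lastState s l₁) l₂ := by
  induction l₁ generalizing μ s with
  | nil => rfl
  | cons x l ih =>
    obtain ⟨a, s'⟩ := x
    simp only [List.cons_append, rootSamplingMeasure, ih, lastState_cons]

variable {P} in
theorem measurable_lik [MeasurableSpace Θ]
    (hP : ∀ s a s', Measurable fun θ => P θ s a s') (s : S) (l : List (A × S)) :
    Measurable fun θ => lik P θ s l := by
  induction l generalizing s with
  | nil => exact measurable_const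
  | cons x l ih => exact (hP s x.1 x.2).mul (ih x.2)

end History

theorem rootSamplingMeasure_eq_posterior_general {Θ S A : Type*} [MeasurableSpace Θ]
    (b₀ : Measure Θ) [IsProbabilityMeasure b₀]
    (P : Θ → S → A → S → ℝ≥0∞)
    (hPmeas : ∀ (s : S) (a : A) (s' : S), Measurable fun θ => P θ s a s')
    (s₀ : S) (l : List (A × S))
    (hZpos : ∀ n, 0 < ∫⁻ θ, lik P θ s₀ (l.take n) ∂b₀)
    (hZfin : ∀ n, ∫⁻ θ, lik P θ s₀ (l.take n) ∂b₀ < ∞) :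
    rootSamplingMeasure P b₀ s₀ l =
      b₀.withDensity fun θ => lik P θ s₀ l / ∫⁻ θ', lik P θ' s₀ l ∂b₀ := by
  suffices ∀ n, rootSamplingMeasure P b₀ s₀ (l.take n) =
      b₀.normalizedWithDensity fun θ => lik P θ s₀ (l.take n) by
    simpa only [List.take_length, normalizedWithDensity] using this l.length
  intro n
  induction n with
  | zero => exact (normalizedWithDensity_one b₀).symm
  | succ n ih =>
    rw [List.take_add_one]
    cases l[n]? with
    | none => simpa using ih
    | some x =>
      rw [Option.toList_some, rootSamplingMeasure_append, ih]
      simp only [lik_append, lik, mul_one]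
      exact normalizedWithDensity_normalizedWithDensity (measurable_lik hPmeas _ _) (hPmeas _ _ _)
        (hZpos n).ne' (hZfin n).ne

/-- **Lemma 1 (measure-theoretic version): root sampling computes the correct Bayesian
posterior.** Let `b₀` be a prior probability measure on a measurable parameter space `Θ`,
let `S` and `A` be countable state and action types, and let `P θ s a s'` be a measurable
nonnegative likelihood with `∑_{s'} P θ s a s' = 1`. If every batch normalizer
`∫⁻ L_{h'} db₀` along the history is strictly positive and finite, and every one-step
root-sampling normalizer is strictly positive and finite, then the root-sampling measure
at the history equals the true posterior measure, i.e. the measure with density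
`L_h / ∫⁻ L_h db₀` with respect to `b₀`. -/
theorem rootSamplingMeasure_eq_posterior {Θ S A : Type*} [MeasurableSpace Θ]
    [Countable S] [Countable A]
    (b₀ : Measure Θ) [IsProbabilityMeasure b₀]
    (P : Θ → S → A → S → ℝ≥0∞)
    (hPmeas : ∀ (s : S) (a : A) (s' : S), Measurable fun θ => P θ s a s')
    (hPsum : ∀ (θ : Θ) (s : S) (a : A), ∑' s' : S, P θ s a s' = 1)
    (s₀ : S) (l : List (A × S))
    (hZpos : ∀ n, 0 < ∫⁻ θ, lik P θ s₀ (l.take n) ∂b₀)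
    (hZfin : ∀ n, ∫⁻ θ, lik P θ s₀ (l.take n) ∂b₀ < ∞)
    (hZtildePos : ∀ (n : ℕ) (hn : n < l.length),
      0 < ∫⁻ θ', P θ' (lastState s₀ (l.take n)) (l.get ⟨n, hn⟩).1 (l.get ⟨n, hn⟩).2
            ∂(rootSamplingMeasure P b₀ s₀ (l.take n)))
    (hZtildeFin : ∀ (n : ℕ) (hn : n < l.length),
      (∫⁻ θ', P θ' (lastState s₀ (l.take n)) (l.get ⟨n, hn⟩).1 (l.get ⟨n, hn⟩).2
            ∂(rootSamplingMeasure P b₀ s₀ (l.take n))) < ∞) :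
    rootSamplingMeasure P b₀ s₀ l =
      b₀.withDensity fun θ => lik P θ s₀ l / ∫⁻ θ', lik P θ' s₀ l ∂b₀ :=
  rootSamplingMeasure_eq_posterior_general b₀ P hPmeas s₀ l hZpos hZfin
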